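/- Let p be a polynomial in the Smith–Kidger Type 5 space P₂ ⊕ span{x₁x₂x₃, x₁²x₂+x₁x₂², x₂²x₃+x₂x₃², x₃²x₁+x₃x₁²}. If p vanishes at the four points (1,±1,±1) and at (1,0,0), then the integral of p(1,x₂,x₃) over [−1,1]² equals zero. -/
import Mathlib

open MvPolynomial

noncomputable def SK5 : Submodule ℝ (MvPolynomial (Fin 3) ℝ) :=
  MvPolynomial.restrictTotalDegree (Fin 3) ℝ 2 ⊔
    Submodule.span ℝ {X 0 * X 1 * X 2, X 0 ^ 2 * X 1 + X 0 * X 1 ^ 2,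
      X 1 ^ 2 * X 2 + X 1 * X 2 ^ 2, X 2 ^ 2 * X 0 + X 2 * X 0 ^ 2}

namespace SK5aux

lemma contEval (p : MvPolynomial (Fin 3) ℝ) :
    Continuous fun yz : ℝ × ℝ => eval ![1, yz.1, yz.2] p := by
  apply (MvPolynomial.continuous_eval p).comp
  apply continuous_pi
  intro i
  fin_cases i <;> simp <;> fun_prop

lemma contInner (p : MvPolynomial (Fin 3) ℝ) (y : ℝ) :
    Continuous fun z : ℝ => eval ![1, y, z] p := by
  apply (MvPolynomial.continuous_eval p).comp
  apply continuous_pi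
  intro i
  fin_cases i <;> simp <;> fun_prop

lemma contOuter (p : MvPolynomial (Fin 3) ℝ) :
    Continuous fun y : ℝ => ∫ z in (-1:ℝ)..1, eval ![1, y, z] p :=
  intervalIntegral.continuous_parametric_intervalIntegral_of_continuous'
    (f := fun y z => eval ![1, y, z] p) (contEval p) _ _

noncomputable def I (p : MvPolynomial (Fin 3) ℝ) : ℝ :=
  ∫ y in (-1:ℝ)..1, ∫ z in (-1:ℝ)..1, eval ![1, y, z] p

lemma I_add (p q : MvPolynomial (Fin 3) ℝ) : I (p + q) = I p + I q := by
  unfold I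
  simp only [map_add]
  rw [← intervalIntegral.integral_add ((contOuter p).intervalIntegrable _ _)
    ((contOuter q).intervalIntegrable _ _)]
  apply intervalIntegral.integral_congr
  intro y _
  exact intervalIntegral.integral_add ((contInner p y).intervalIntegrable _ _)
    ((contInner q y).intervalIntegrable _ _)

lemma I_smul (c : ℝ) (p : MvPolynomial (Fin 3) ℝ) : I (c • p) = c * I p := by
  unfold I
  simp only [MvPolynomial.smul_eval]
  rw [← intervalIntegral.integral_const_mul]
  apply intervalIntegral.integral_congr
  intro y _
  exact intervalIntegral.integral_const_mul _ _

noncomputable def L : MvPolynomial (Fin 3) ℝ →ₗ[ℝ] ℝ where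
  toFun p := I p - ((1/3) * (eval ![1, 1, 1] p + eval ![1, 1, -1] p
    + eval ![1, -1, 1] p + eval ![1, -1, -1] p) + (8/3) * eval ![1, 0, 0] p)
  map_add' p q := by simp only [I_add, map_add]; ring
  map_smul' c p := by simp only [I_smul, MvPolynomial.smul_eval, smul_eq_mul,
    RingHom.id_apply]; ring

lemma integ (c : ℝ) (a b : ℕ) :
    (∫ y in (-1:ℝ)..1, ∫ z in (-1:ℝ)..1, c * y ^ a * z ^ b)
      = c * ((1 - (-1:ℝ) ^ (a+1)) / (a+1)) * ((1 - (-1:ℝ) ^ (b+1)) / (b+1)) := by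
  have hz : ∀ y : ℝ, (∫ z in (-1:ℝ)..1, c * y ^ a * z ^ b)
      = c * y ^ a * ((1 - (-1:ℝ) ^ (b+1)) / (b+1)) := by
    intro y
    rw [intervalIntegral.integral_const_mul, integral_pow]
    ring
  simp only [hz]
  rw [intervalIntegral.integral_mul_const, intervalIntegral.integral_const_mul, integral_pow]
  ring

lemma L_monomial (d : Fin 3 →₀ ℕ) (c : ℝ) (h1 : d 1 ≤ 2) (h2 : d 2 ≤ 2)
    (h3 : d 1 + d 2 ≤ 3) : L (monomial d c) = 0 := by
  have he : ∀ x : Fin 3 → ℝ, eval x (monomial d c)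
      = c * (x 0 ^ d 0 * (x 1 ^ d 1 * x 2 ^ d 2)) := by
    intro x
    rw [eval_monomial, Finsupp.prod_pow, Fin.prod_univ_three]
    ring
  show I (monomial d c) - _ = 0
  unfold I
  simp only [he]
  simp only [Matrix.cons_val_zero, Matrix.cons_val_one, Matrix.head_cons,
    Matrix.cons_val_two, Matrix.tail_cons, one_pow, one_mul]
  have hint : (∫ y in (-1:ℝ)..1, ∫ z in (-1:ℝ)..1, c * (y ^ d 1 * z ^ d 2))
      = c * ((1 - (-1:ℝ) ^ (d 1+1)) / (d 1+1)) * ((1 - (-1:ℝ) ^ (d 2+1)) / (d 2+1)) := by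
    rw [← integ c (d 1) (d 2)]
    congr 1; funext y; congr 1; funext z; ring
  rw [hint]
  set a := d 1 with ha
  set b := d 2 with hb
  clear_value a b
  interval_cases a <;> interval_cases b <;> first | omega | (norm_num <;> ring)

end SK5aux

set_option maxHeartbeats 800000 in
theorem stmt6 (p : MvPolynomial (Fin 3) ℝ) (hp : p ∈ SK5)
    (h1 : eval ![1, 1, 1] p = 0) (h2 : eval ![1, 1, -1] p = 0)
    (h3 : eval ![1, -1, 1] p = 0) (h4 : eval ![1, -1, -1] p = 0)
    (h5 : eval ![1, 0, 0] p = 0) :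
    (∫ y in (-1 : ℝ)..1, ∫ z in (-1 : ℝ)..1, eval ![1, y, z] p) = 0 := by
  have hker : SK5 ≤ LinearMap.ker SK5aux.L := by
    apply sup_le
    · intro q hq
      rw [MvPolynomial.mem_restrictTotalDegree] at hq
      rw [← q.support_sum_monomial_coeff]
      apply Submodule.sum_mem
      intro d hd
      rw [LinearMap.mem_ker]
      have hdeg : (d.sum fun _ e => e) ≤ 2 := le_trans (MvPolynomial.le_totalDegree hd) hq
      rw [Finsupp.sum_fintype _ _ (fun _ => rfl), Fin.sum_univ_three] at hdeg
      exact SK5aux.L_monomial d _ (by omega) (by omega) (by omega)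
    · rw [Submodule.span_le]
      intro x hx
      simp only [Set.mem_insert_iff, Set.mem_singleton_iff] at hx
      have e0 : ∀ (i j k : Fin 3), (X i * X j * X k : MvPolynomial (Fin 3) ℝ)
          = monomial (Finsupp.single i 1 + Finsupp.single j 1 + Finsupp.single k 1) 1 := by
        intro i j k
        simp [X, monomial_mul]
      have e1 : ∀ (i j : Fin 3), (X i ^ 2 * X j : MvPolynomial (Fin 3) ℝ)
          = monomial (Finsupp.single i 2 + Finsupp.single j 1) 1 := by
        intro i j
        rw [X_pow_eq_monomial, X, monomial_mul]
        norm_num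
      have e2 : ∀ (i j : Fin 3), (X i * X j ^ 2 : MvPolynomial (Fin 3) ℝ)
          = monomial (Finsupp.single i 1 + Finsupp.single j 2) 1 := by
        intro i j
        rw [X_pow_eq_monomial, X, monomial_mul]
        norm_num
      have hm : ∀ (d : Fin 3 →₀ ℕ) (c : ℝ), d 1 ≤ 2 → d 2 ≤ 2 → d 1 + d 2 ≤ 3 →
          (monomial d c) ∈ LinearMap.ker SK5aux.L := by
        intro d c a b cc
        rw [LinearMap.mem_ker]
        exact SK5aux.L_monomial d c a b cc
      rcases hx with h | h | h | h <;> subst h <;> rw [SetLike.mem_coe]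
      · rw [e0]; apply hm <;> simp [Finsupp.single_apply]
      · rw [e1, e2]
        exact Submodule.add_mem _
          (hm _ _ (by simp [Finsupp.single_apply]) (by simp [Finsupp.single_apply])
            (by simp [Finsupp.single_apply]))
          (hm _ _ (by simp [Finsupp.single_apply]) (by simp [Finsupp.single_apply])
            (by simp [Finsupp.single_apply]))
      · rw [e1, e2]
        exact Submodule.add_mem _
          (hm _ _ (by simp [Finsupp.single_apply]) (by simp [Finsupp.single_apply])
            (by simp [Finsupp.single_apply]))
          (hm _ _ (by simp [Finsupp.single_apply]) (by simp [Finsupp.single_apply])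
            (by simp [Finsupp.single_apply]))
      · rw [e1, e2]
        exact Submodule.add_mem _
          (hm _ _ (by simp [Finsupp.single_apply]) (by simp [Finsupp.single_apply])
            (by simp [Finsupp.single_apply]))
          (hm _ _ (by simp [Finsupp.single_apply]) (by simp [Finsupp.single_apply])
            (by simp [Finsupp.single_apply]))
  have hL := hker hp
  rw [LinearMap.mem_ker] at hL
  have heq : SK5aux.L p = SK5aux.I p - ((1/3) * (eval ![1, 1, 1] p + eval ![1, 1, -1] p
    + eval ![1, -1, 1] p + eval ![1, -1, -1] p) + (8/3) * eval ![1, 0, 0] p) := rfl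
  rw [heq, h1, h2, h3, h4, h5] at hL
  have : SK5aux.I p = 0 := by linarith
  exact this
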